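/- arXiv:0904.0104 — 2 statements merged into one kernel-verified Lean document; each statement's English description precedes it below -/
import Mathlib

section
/- The polynomial p₆ has at least four distinct real roots in the open interval (0, 2). -/
noncomputable def p6 (x : ℝ) : ℝ :=
  94860*x^16 - 468000*x^15 + 1562520*x^14 - 4008000*x^13 + 8070115*x^12
  - 13885480*x^11 + 20117227*x^10 - 25245080*x^9 + 27575870*x^8
  - 25883264*x^7 + 21320504*x^6 - 14780736*x^5 + 8807200*x^4
  - 4242816*x^3 + 1608048*x^2 - 445824*x + 59616

/-! `p6` alternates in sign at `0.3, 0.4, 0.5, 1.3, 1.65`, so the intermediate value theorem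
gives a root in each of the four disjoint open intervals between consecutive points. -/

open Set

theorem exists_mem_Ioo_eq_zero_of_mul_neg {α : Type*} [ConditionallyCompleteLinearOrder α]
    [TopologicalSpace α] [OrderTopology α] [DenselyOrdered α] {f : α → ℝ} {a b : α}
    (hab : a ≤ b) (hf : ContinuousOn f (Icc a b)) (h : f a * f b < 0) :
    ∃ x ∈ Ioo a b, f x = 0 := by
  rcases mul_neg_iff.1 h with ⟨ha, hb⟩ | ⟨ha, hb⟩
  · exact intermediate_value_Ioo' hab hf ⟨hb, ha⟩
  · exact intermediate_value_Ioo hab hf ⟨ha, hb⟩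

theorem continuous_p6 : Continuous p6 := by
  unfold p6
  fun_prop

theorem exists_mem_Ioo_p6_eq_zero {a b : ℝ} (hab : a ≤ b) (h : p6 a * p6 b < 0) :
    ∃ x ∈ Ioo a b, p6 x = 0 :=
  exists_mem_Ioo_eq_zero_of_mul_neg hab continuous_p6.continuousOn h

theorem stmt_9 :
    ∃ a b c d : ℝ, 0 < a ∧ a < b ∧ b < c ∧ c < d ∧ d < 2 ∧
      p6 a = 0 ∧ p6 b = 0 ∧ p6 c = 0 ∧ p6 d = 0 := by
  obtain ⟨a, ⟨ha₁, ha₂⟩, hpa⟩ :=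
    exists_mem_Ioo_p6_eq_zero (a := 0.3) (b := 0.4) (by norm_num) (by norm_num [p6])
  obtain ⟨b, ⟨hb₁, hb₂⟩, hpb⟩ :=
    exists_mem_Ioo_p6_eq_zero (a := 0.4) (b := 0.5) (by norm_num) (by norm_num [p6])
  obtain ⟨c, ⟨hc₁, hc₂⟩, hpc⟩ :=
    exists_mem_Ioo_p6_eq_zero (a := 0.5) (b := 1.3) (by norm_num) (by norm_num [p6])
  obtain ⟨d, ⟨hd₁, hd₂⟩, hpd⟩ :=
    exists_mem_Ioo_p6_eq_zero (a := 1.3) (b := 1.65) (by norm_num) (by norm_num [p6])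
  exact ⟨a, b, c, d, by linarith, by linarith, by linarith, by linarith, by linarith,
    hpa, hpb, hpc, hpd⟩
end

section
/- Let u₀, u₁, x, e be positive real numbers with 14x^4 + 5x^2 − 7 ≠ 0, satisfying the four equations: (i) −7u₀ + 60ex^2 − 8u₀x^2 = 0; (ii) −u₁^2 − 6x^2 + 60eu₁x^2 − 8u₁^2x^2 = 0; (iii) −240 + 480e + u₀ + 91u₁ + 28x = 0; (iv) u₀ + 13u₁ − 28x + 120ex^2 − 16x^3 = 0. Then x = 1, or x = 7/23, or 11904x^8 − 30720x^7 + 56144x^6 − 86400x^5 + 80752x^4 − 79440x^3 + 42853x^2 − 23850x + 6293 = 0. -/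
/-!
Equations (i), (iii), (iv) are linear in `u₀` and `e`. Eliminating them leaves a linear
equation `q(x) u₁ + p(x) = 0` and, together with (ii), a quadratic equation in `u₁`. A common
root forces their resultant to vanish, and this resultant factors as
`x² (16x² + 15) (x - 1) (23x - 7)` times the octic.
-/

theorem resultant_linear_quadratic_eq_zero {R : Type*} [CommRing R] {p q a b c u : R}
    (hlin : q * u + p = 0) (hquad : a * u ^ 2 + b * u + c = 0) :
    a * p ^ 2 - b * p * q + c * q ^ 2 = 0 := by
  linear_combination q ^ 2 * hquad - (a * (q * u - p) + b * q) * hlin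

structure EinsteinSystem {K : Type*} [Field K] (u₀ u₁ x e : K) : Prop where
  eq₁ : -7*u₀ + 60*e*x^2 - 8*u₀*x^2 = 0
  eq₂ : -u₁^2 - 6*x^2 + 60*e*u₁*x^2 - 8*u₁^2*x^2 = 0
  eq₃ : -240 + 480*e + u₀ + 91*u₁ + 28*x = 0
  eq₄ : u₀ + 13*u₁ - 28*x + 120*e*x^2 - 16*x^3 = 0

namespace EinsteinSystem

variable {K : Type*} [Field K] {u₀ u₁ x e : K}

theorem mul_u₀_eq_of_eq₄ (hS : EinsteinSystem u₀ u₁ x e) :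
    (16*x^2 + 15) * u₀ = 16*x^3 + 28*x - 13*u₁ := by
  linear_combination hS.eq₄ - 2 * hS.eq₁

theorem mul_u₀_eq_of_eq₃ (hS : EinsteinSystem u₀ u₁ x e) :
    (65*x^2 + 56) * u₀ = 240*x^2 - 28*x^3 - 91*x^2*u₁ := by
  linear_combination x^2 * hS.eq₃ - 8 * hS.eq₁

theorem linear_u₁ [CharZero K] (hS : EinsteinSystem u₀ u₁ x e) :
    13*(14*x^4 + 5*x^2 - 7) * u₁ + (186*x^5 - 480*x^4 + 392*x^3 - 450*x^2 + 196*x) = 0 := by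
  linear_combination ((16*x^2 + 15) * hS.mul_u₀_eq_of_eq₃
    - (65*x^2 + 56) * hS.mul_u₀_eq_of_eq₄) / 8

theorem quadratic_u₁ [CharZero K] (hS : EinsteinSystem u₀ u₁ x e) :
    (64*x^4 + 120*x^2 + 53) * u₁^2 + (-64*x^5 - 168*x^3 - 98*x) * u₁ + (48*x^4 + 45*x^2) = 0 := by
  linear_combination -((16*x^2 + 15) * hS.eq₂ - (16*x^2 + 15) * u₁ * hS.eq₁
    - u₁ * (8*x^2 + 7) * hS.mul_u₀_eq_of_eq₄) / 2

theorem factorization [CharZero K] (hS : EinsteinSystem u₀ u₁ x e) :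
    x^2 * (16*x^2 + 15) * ((x - 1) * (23*x - 7) *
      (11904*x^8 - 30720*x^7 + 56144*x^6 - 86400*x^5 + 80752*x^4
        - 79440*x^3 + 42853*x^2 - 23850*x + 6293)) = 0 := by
  linear_combination resultant_linear_quadratic_eq_zero hS.linear_u₁ hS.quadratic_u₁

end EinsteinSystem

theorem stmt_17_general (u₀ u₁ x e : ℝ)
    (hx : 0 < x)
    (h1 : -7*u₀ + 60*e*x^2 - 8*u₀*x^2 = 0)
    (h2 : -u₁^2 - 6*x^2 + 60*e*u₁*x^2 - 8*u₁^2*x^2 = 0)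
    (h3 : -240 + 480*e + u₀ + 91*u₁ + 28*x = 0)
    (h4 : u₀ + 13*u₁ - 28*x + 120*e*x^2 - 16*x^3 = 0) :
    x = 1 ∨ x = 7/23 ∨
      11904*x^8 - 30720*x^7 + 56144*x^6 - 86400*x^5 + 80752*x^4
        - 79440*x^3 + 42853*x^2 - 23850*x + 6293 = 0 := by
  have hS : EinsteinSystem u₀ u₁ x e := ⟨h1, h2, h3, h4⟩
  have hprefactor : x^2 * (16*x^2 + 15) ≠ 0 := by positivity
  rcases mul_eq_zero.1 ((mul_eq_zero.1 hS.factorization).resolve_left hprefactor) with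
    hlinear | hoctic
  · rcases mul_eq_zero.1 hlinear with h | h
    · exact Or.inl (by linarith)
    · exact Or.inr (Or.inl (by linarith))
  · exact Or.inr (Or.inr hoctic)

theorem stmt_17 (u₀ u₁ x e : ℝ)
    (hu₀ : 0 < u₀) (hu₁ : 0 < u₁) (hx : 0 < x) (he : 0 < e)
    (hnd : 14*x^4 + 5*x^2 - 7 ≠ 0)
    (h1 : -7*u₀ + 60*e*x^2 - 8*u₀*x^2 = 0)
    (h2 : -u₁^2 - 6*x^2 + 60*e*u₁*x^2 - 8*u₁^2*x^2 = 0)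
    (h3 : -240 + 480*e + u₀ + 91*u₁ + 28*x = 0)
    (h4 : u₀ + 13*u₁ - 28*x + 120*e*x^2 - 16*x^3 = 0) :
    x = 1 ∨ x = 7/23 ∨
      11904*x^8 - 30720*x^7 + 56144*x^6 - 86400*x^5 + 80752*x^4
        - 79440*x^3 + 42853*x^2 - 23850*x + 6293 = 0 :=
  stmt_17_general u₀ u₁ x e hx h1 h2 h3 h4
end
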